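/- Let M, L ∈ ℝ^{d×d} be symmetric matrices such that M + L is invertible and every complex eigenvalue λ of (M + L)⁻¹(L − M) is real with −1 < λ < 1. Then M is invertible and every complex eigenvalue of M⁻¹L is a real number that is strictly positive. -/

import Mathlib

/-!
Put `A = (M + L)⁻¹ (L - M)`. Then `(M + L)(1 - A) = 2M` and `(M + L)(1 + A) = 2L`. Since `1` is
not an eigenvalue of `A`, the first identity makes `M` invertible, and the two together give
`(1 - A) M⁻¹ L = 1 + A`: `M⁻¹ L` is the Cayley transform of `A`, so its eigenvalues are
`(1 + ν) / (1 - ν)` for the eigenvalues `ν ∈ (-1, 1)` of `A`, which are real and positive.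
-/

open Matrix

namespace Matrix

variable {n : Type*} [Fintype n] [DecidableEq n]

theorem isUnit_of_isUnit_map {K S : Type*} [Field K] [CommRing S] [Nontrivial S] (f : K →+* S)
    {X : Matrix n n K} (h : IsUnit (f.mapMatrix X)) : IsUnit X := by
  rw [isUnit_iff_isUnit_det] at h ⊢
  rw [← RingHom.map_det] at h
  exact IsUnit.of_map f _ h

variable {R : Type*} [CommRing R] {M L : Matrix n n R}

theorem add_mul_one_sub_inv_mul_sub (hML : IsUnit (M + L)) :
    (M + L) * (1 - (M + L)⁻¹ * (L - M)) = M + M := by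
  rw [mul_sub, mul_one, mul_nonsing_inv_cancel_left _ _ ((isUnit_iff_isUnit_det _).mp hML)]
  abel

theorem add_mul_one_add_inv_mul_sub (hML : IsUnit (M + L)) :
    (M + L) * (1 + (M + L)⁻¹ * (L - M)) = L + L := by
  rw [mul_add, mul_one, mul_nonsing_inv_cancel_left _ _ ((isUnit_iff_isUnit_det _).mp hML)]
  abel

theorem isUnit_of_isUnit_one_sub_inv_mul_sub (hML : IsUnit (M + L))
    (h : IsUnit (1 - (M + L)⁻¹ * (L - M))) : IsUnit M := by
  have h2M : IsUnit ((2 : R) • M) := by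
    rw [two_smul, ← add_mul_one_sub_inv_mul_sub hML]
    exact hML.mul h
  rw [isUnit_iff_isUnit_det, det_smul] at h2M
  rw [isUnit_iff_isUnit_det]
  exact isUnit_of_mul_isUnit_right h2M

theorem one_sub_inv_mul_sub_mul_inv_mul (hML : IsUnit (M + L)) (hM : IsUnit M) :
    (1 - (M + L)⁻¹ * (L - M)) * (M⁻¹ * L) = 1 + (M + L)⁻¹ * (L - M) := by
  refine hML.mul_left_cancel ?_
  rw [← mul_assoc, add_mul_one_sub_inv_mul_sub hML, add_mul_one_add_inv_mul_sub hML, add_mul,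
    mul_nonsing_inv_cancel_left _ _ ((isUnit_iff_isUnit_det _).mp hM)]

end Matrix

theorem spectrum.exists_mul_one_sub_eq_one_add {𝕜 A : Type*} [Field 𝕜] [NeZero (2 : 𝕜)] [Ring A]
    [Algebra 𝕜 A] {a x : A} (ha : IsUnit (1 - a)) (hx : (1 - a) * x = 1 + a) {μ : 𝕜}
    (hμ : μ ∈ spectrum 𝕜 x) : ∃ ν ∈ spectrum 𝕜 a, μ * (1 - ν) = 1 + ν := by
  have hmul : (1 - a) * (algebraMap 𝕜 A μ - x) = algebraMap 𝕜 A (μ - 1) - (μ + 1) • a := by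
    rw [mul_sub, hx, Algebra.algebraMap_eq_smul_one, Algebra.algebraMap_eq_smul_one]
    simp only [mul_smul_comm, mul_one]
    module
  rw [spectrum.mem_iff, ← ha.mul_left_iff, hmul] at hμ
  have hμ1 : μ + 1 ≠ 0 := by
    intro h0
    rw [h0, zero_smul, sub_zero, show μ - 1 = -2 by linear_combination h0] at hμ
    exact hμ ((isUnit_iff_ne_zero.mpr (neg_ne_zero.mpr two_ne_zero)).map _)
  refine ⟨(μ - 1) / (μ + 1), ?_, by field_simp; ring⟩
  rw [spectrum.mem_iff]
  refine fun hu => hμ ?_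
  have hscale : algebraMap 𝕜 A (μ - 1) - (μ + 1) • a
      = (μ + 1) • (algebraMap 𝕜 A ((μ - 1) / (μ + 1)) - a) := by
    rw [smul_sub, Algebra.smul_def (μ + 1) (algebraMap 𝕜 A _), ← map_mul, mul_div_cancel₀ _ hμ1]
  rw [hscale, Algebra.smul_def]
  exact ((isUnit_iff_ne_zero.mpr hμ1).map _).mul hu

theorem Complex.im_eq_zero_and_re_pos_of_mul_one_sub_eq_one_add {μ ν : ℂ} (hν : ν.im = 0)
    (hν₁ : -1 < ν.re) (hν₂ : ν.re < 1) (h : μ * (1 - ν) = 1 + ν) : μ.im = 0 ∧ 0 < μ.re := by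
  obtain ⟨r, rfl⟩ : ∃ r : ℝ, ν = r := ⟨ν.re, Complex.ext rfl hν⟩
  rw [ofReal_re] at hν₁ hν₂
  have hr : (1 : ℂ) - r ≠ 0 := by exact_mod_cast (sub_pos.mpr hν₂).ne'
  have hμ : μ = ((1 + r) / (1 - r) : ℝ) := by
    push_cast
    rwa [eq_div_iff hr]
  rw [hμ, ofReal_im, ofReal_re]
  exact ⟨rfl, div_pos (by linarith) (by linarith)⟩

theorem stmt_5 {d : ℕ} (M L : Matrix (Fin d) (Fin d) ℝ)
    (hMLinv : IsUnit (M + L))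
    (h : ∀ μ ∈ spectrum ℂ (((M + L)⁻¹ * (L - M)).map (Complex.ofReal : ℝ → ℂ)),
      μ.im = 0 ∧ -1 < μ.re ∧ μ.re < 1) :
    IsUnit M ∧
      ∀ μ ∈ spectrum ℂ ((M⁻¹ * L).map (Complex.ofReal : ℝ → ℂ)),
        μ.im = 0 ∧ 0 < μ.re := by
  let φ := Complex.ofRealHom.mapMatrix (m := Fin d)
  have h1 : (1 : ℂ) ∉ spectrum ℂ (φ ((M + L)⁻¹ * (L - M))) := fun h1 => by
    simpa using (h 1 h1).2.2
  have hA : IsUnit (1 - φ ((M + L)⁻¹ * (L - M))) := by simpa using spectrum.notMem_iff.mp h1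
  have hM : IsUnit M := isUnit_of_isUnit_one_sub_inv_mul_sub hMLinv
    (isUnit_of_isUnit_map Complex.ofRealHom (by rwa [map_sub, map_one]))
  refine ⟨hM, fun μ hμ => ?_⟩
  have hx := congrArg φ (one_sub_inv_mul_sub_mul_inv_mul hMLinv hM)
  rw [map_mul, map_sub, map_add, map_one] at hx
  obtain ⟨ν, hν, hμν⟩ := spectrum.exists_mul_one_sub_eq_one_add hA hx hμ
  obtain ⟨hνim, hν₁, hν₂⟩ := h ν hν
  exact Complex.im_eq_zero_and_re_pos_of_mul_one_sub_eq_one_add hνim hν₁ hν₂ hμν
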